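/- arXiv:1903.11220 — 6 statements merged into one kernel-verified Lean document; each statement's English description precedes it below -/
import Mathlib

section
/- (Theorem 1, limit form.) Let d, q be positive integers, let t : ℝ^d → ℝ^q be Fréchet differentiable at a point X with derivative represented by the q × d Jacobian matrix t'(X), and let p > 1. Then the limit as δ ↓ 0 of (1/δ)·sup{ ‖t(X + Δ) − t(X)‖₁ : Δ ∈ ℝ^d, ‖Δ‖_p^p ≤ d·δ^p } exists and equals d^{1/p}·max over sign vectors σ ∈ {−1,1}^q of ‖σᵀ t'(X)‖_{p/(p−1)}. -/
open Real Set Filter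

/-- The entrywise `ℓ_p` norm of a vector in `ℝⁿ`: `(∑ i, |x i|^p)^(1/p)`. -/
noncomputable def pnorm (p : ℝ) {n : ℕ} (x : Fin n → ℝ) : ℝ := (∑ i, |x i| ^ p) ^ (1 / p)

/-- The sign vector in `{-1,1}^q` encoded by a Boolean vector. -/
def signVec {q : ℕ} (σ : Fin q → Bool) : Fin q → ℝ := fun i => if σ i then 1 else -1

/-!
By Hölder's inequality `σᵀ J Δ ≤ ‖σᵀ J‖_{p'} ‖Δ‖_p`, and `‖J Δ‖₁` is the largest of the numbers
`σᵀ J Δ` over sign vectors `σ`; the Hölder-extremal vector of the best `σ` attains the bound.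
So the linearised supremum over the `ℓ_p` ball of radius `ρ = d^{1/p} δ` is exactly
`ρ · max_σ ‖σᵀ J‖_{p'}`. Differentiability changes every value on that ball by `o(ρ)`,
hence the supremum as well.
-/

open Topology Asymptotics Matrix

section pnorm

variable {n : ℕ}

lemma pnorm_nonneg (p : ℝ) (x : Fin n → ℝ) : 0 ≤ pnorm p x := by
  unfold pnorm; positivity

lemma pnorm_zero {p : ℝ} (hp : 0 < p) : pnorm p (0 : Fin n → ℝ) = 0 := by
  simp [pnorm, zero_rpow hp.ne', hp.ne']

lemma pnorm_smul {p : ℝ} (hp : 0 < p) (c : ℝ) (x : Fin n → ℝ) :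
    pnorm p (c • x) = |c| * pnorm p x := by
  have hsum : ∑ i, |(c • x) i| ^ p = |c| ^ p * ∑ i, |x i| ^ p := by
    simp only [Pi.smul_apply, smul_eq_mul, abs_mul, Finset.mul_sum]
    exact Finset.sum_congr rfl fun i _ => mul_rpow (abs_nonneg c) (abs_nonneg _)
  rw [pnorm, pnorm, hsum, mul_rpow (by positivity) (by positivity), ← rpow_mul (abs_nonneg c),
    mul_one_div_cancel hp.ne', rpow_one]

lemma pnorm_le_iff {p ρ : ℝ} (hp : 0 < p) (hρ : 0 ≤ ρ) (x : Fin n → ℝ) :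
    pnorm p x ≤ ρ ↔ ∑ i, |x i| ^ p ≤ ρ ^ p := by
  rw [pnorm, one_div, rpow_inv_le_iff_of_pos (by positivity) hρ hp]

lemma norm_le_pnorm {p : ℝ} (hp : 0 < p) (x : Fin n → ℝ) : ‖x‖ ≤ pnorm p x := by
  refine (pi_norm_le_iff_of_nonneg (pnorm_nonneg p x)).2 fun j => ?_
  rw [norm_eq_abs, ← rpow_le_rpow_iff (abs_nonneg _) (pnorm_nonneg p x) hp, pnorm,
    ← rpow_mul (by positivity), one_div_mul_cancel hp.ne', rpow_one]
  exact Finset.single_le_sum (f := fun i => |x i| ^ p) (fun i _ => by positivity)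
    (Finset.mem_univ j)

lemma dotProduct_le_pnorm_mul_pnorm {p p' : ℝ} (hpq : p.HolderConjugate p') (v x : Fin n → ℝ) :
    v ⬝ᵥ x ≤ pnorm p' v * pnorm p x :=
  inner_le_Lp_mul_Lq Finset.univ v x hpq.symm

lemma abs_sign_mul_abs_rpow (y : ℝ) {s : ℝ} (hs : 0 < s) : |sign y * |y| ^ s| = |y| ^ s := by
  rcases lt_trichotomy y 0 with h | rfl | h
  · simp [sign_of_neg h, abs_of_nonneg (rpow_nonneg (abs_nonneg y) s)]
  · simp [zero_rpow hs.ne']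
  · simp [sign_of_pos h, abs_of_nonneg (rpow_nonneg (abs_nonneg y) s)]

lemma mul_sign_mul_abs_rpow (y : ℝ) {s : ℝ} (hs : 0 < s) :
    y * (sign y * |y| ^ s) = |y| ^ (s + 1) := by
  rcases lt_trichotomy y 0 with h | rfl | h
  · rw [sign_of_neg h, rpow_add_one (abs_pos.2 h.ne).ne', abs_of_neg h]; ring
  · simp [zero_rpow hs.ne', zero_rpow (by linarith : s + 1 ≠ 0)]
  · rw [sign_of_pos h, rpow_add_one (abs_pos.2 h.ne').ne', abs_of_pos h]; ring

/-- The vector `sign(v) |v|^{p'-1}` turns Hölder's inequality for `v` into an equality. -/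
lemma exists_pnorm_eq_dotProduct_eq {p p' : ℝ} (hpq : p.HolderConjugate p') (v : Fin n → ℝ) :
    ∃ w : Fin n → ℝ, pnorm p w = pnorm p' v ^ (p' - 1) ∧ v ⬝ᵥ w = pnorm p' v ^ p' := by
  have hp := hpq.pos
  have hp' := hpq.symm.pos
  have hp'1 := hpq.symm.sub_one_pos
  have hexp : (p' - 1) * p = p' := hpq.symm.sub_one_mul_conj
  set S := ∑ j, |v j| ^ p'
  have hS : 0 ≤ S := by positivity
  refine ⟨fun j => sign (v j) * |v j| ^ (p' - 1), ?_, ?_⟩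
  · have hsum : ∑ j, |sign (v j) * |v j| ^ (p' - 1)| ^ p = S := by
      simp only [abs_sign_mul_abs_rpow _ hp'1, ← rpow_mul (abs_nonneg _), hexp, S]
    rw [pnorm, pnorm, hsum, ← rpow_mul hS]
    congr 1
    field_simp
    linarith
  · rw [pnorm, ← rpow_mul hS, one_div_mul_cancel hp'.ne', rpow_one]
    refine Finset.sum_congr rfl fun j _ => ?_
    rw [mul_sign_mul_abs_rpow _ hp'1, sub_add_cancel]

lemma exists_pnorm_le_mul_pnorm_le_dotProduct {p p' : ℝ} (hpq : p.HolderConjugate p')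
    (v : Fin n → ℝ) {r : ℝ} (hr : 0 ≤ r) :
    ∃ x : Fin n → ℝ, pnorm p x ≤ r ∧ r * pnorm p' v ≤ v ⬝ᵥ x := by
  obtain ⟨w, hw, hvw⟩ := exists_pnorm_eq_dotProduct_eq hpq v
  set N := pnorm p' v
  rcases (pnorm_nonneg p' v).eq_or_lt with hN | hN
  · exact ⟨0, by rw [pnorm_zero hpq.pos]; exact hr, by simp [N, ← hN]⟩
  refine ⟨(r / N ^ (p' - 1)) • w, ?_, ?_⟩
  · rw [pnorm_smul hpq.pos, hw, abs_of_nonneg (by positivity), div_mul_cancel₀ _ (by positivity)]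
  · rw [dotProduct_smul, hvw, smul_eq_mul, div_mul_eq_mul_div, mul_div_assoc,
      ← rpow_sub hN, sub_sub_cancel, rpow_one]

end pnorm

section signVec

variable {q : ℕ}

lemma signVec_dotProduct_le_sum_abs (σ : Fin q → Bool) (y : Fin q → ℝ) :
    signVec σ ⬝ᵥ y ≤ ∑ i, |y i| :=
  Finset.sum_le_sum fun i _ => by
    unfold signVec; split
    · simpa using le_abs_self (y i)
    · simpa using neg_le_abs (y i)

lemma exists_signVec_dotProduct_eq_sum_abs (y : Fin q → ℝ) :
    ∃ σ : Fin q → Bool, signVec σ ⬝ᵥ y = ∑ i, |y i| :=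
  ⟨fun i => decide (0 ≤ y i), Finset.sum_congr rfl fun i _ => by
    rcases le_or_gt 0 (y i) with h | h
    · simp [signVec, h, abs_of_nonneg h]
    · simp [signVec, h.not_ge, abs_of_neg h]⟩

end signVec

/-- The `ℓ_p → ℓ_1` operator norm of `J` (cf. `isLUB_sum_abs_mulVec`). -/
noncomputable def lpToL1Norm {q d : ℕ} (p : ℝ) (J : Matrix (Fin q) (Fin d) ℝ) : ℝ :=
  ⨆ σ : Fin q → Bool, pnorm (p / (p - 1)) (vecMul (signVec σ) J)

section lpToL1Norm

variable {q d : ℕ} {p : ℝ} (J : Matrix (Fin q) (Fin d) ℝ)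

lemma sum_abs_mulVec_le (hp : 1 < p) (Δ : Fin d → ℝ) :
    ∑ i, |(J *ᵥ Δ) i| ≤ lpToL1Norm p J * pnorm p Δ := by
  obtain ⟨σ, hσ⟩ := exists_signVec_dotProduct_eq_sum_abs (J *ᵥ Δ)
  rw [← hσ, dotProduct_mulVec]
  refine (dotProduct_le_pnorm_mul_pnorm (.conjExponent hp) _ Δ).trans ?_
  refine mul_le_mul_of_nonneg_right ?_ (pnorm_nonneg p Δ)
  exact le_ciSup (f := fun σ : Fin q → Bool => pnorm (p / (p - 1)) (vecMul (signVec σ) J))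
    (Set.finite_range _).bddAbove σ

lemma exists_pnorm_le_lpToL1Norm_mul_le (hp : 1 < p) {r : ℝ} (hr : 0 ≤ r) :
    ∃ Δ : Fin d → ℝ, pnorm p Δ ≤ r ∧ lpToL1Norm p J * r ≤ ∑ i, |(J *ᵥ Δ) i| := by
  obtain ⟨σ, hσ⟩ := exists_eq_ciSup_of_finite
    (f := fun σ : Fin q → Bool => pnorm (p / (p - 1)) (vecMul (signVec σ) J))
  obtain ⟨Δ, hΔ, hle⟩ :=
    exists_pnorm_le_mul_pnorm_le_dotProduct (.conjExponent hp) (vecMul (signVec σ) J) hr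
  refine ⟨Δ, hΔ, ?_⟩
  calc lpToL1Norm p J * r = r * pnorm (p / (p - 1)) (vecMul (signVec σ) J) := by
        rw [lpToL1Norm, ← hσ, mul_comm]
    _ ≤ signVec σ ⬝ᵥ J *ᵥ Δ := by rwa [dotProduct_mulVec]
    _ ≤ ∑ i, |(J *ᵥ Δ) i| := signVec_dotProduct_le_sum_abs σ _

lemma isLUB_sum_abs_mulVec (hp : 1 < p) {r : ℝ} (hr : 0 ≤ r) :
    IsLUB ((fun Δ => ∑ i, |(J *ᵥ Δ) i|) '' {Δ | pnorm p Δ ≤ r}) (lpToL1Norm p J * r) := by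
  refine ⟨?_, fun b hb => ?_⟩
  · rintro _ ⟨Δ, hΔ, rfl⟩
    have hM : 0 ≤ lpToL1Norm p J := Real.iSup_nonneg fun σ => pnorm_nonneg _ _
    exact (sum_abs_mulVec_le J hp Δ).trans (mul_le_mul_of_nonneg_left hΔ hM)
  · obtain ⟨Δ, hΔ, hle⟩ := exists_pnorm_le_lpToL1Norm_mul_le J hp hr
    exact hle.trans (hb ⟨Δ, hΔ, rfl⟩)

end lpToL1Norm

lemma abs_sSup_image_sub_le {α : Type*} {f g : α → ℝ} {K : Set α} {a η : ℝ}
    (hg : IsLUB (g '' K) a) (hfg : ∀ x ∈ K, |f x - g x| ≤ η) : |sSup (f '' K) - a| ≤ η := by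
  have hK : K.Nonempty := by
    by_contra hK
    rw [Set.not_nonempty_iff_eq_empty.1 hK, Set.image_empty, isLUB_empty_iff] at hg
    exact (hg (a - 1)).not_gt (by linarith)
  have hub : ∀ y ∈ f '' K, y ≤ a + η := by
    rintro _ ⟨x, hx, rfl⟩
    linarith [hg.1 ⟨x, hx, rfl⟩, (abs_le.1 (hfg x hx)).2]
  have hlow : a ≤ sSup (f '' K) + η := by
    refine hg.2 ?_
    rintro _ ⟨x, hx, rfl⟩
    linarith [le_csSup ⟨a + η, hub⟩ ⟨x, hx, rfl⟩, (abs_le.1 (hfg x hx)).1]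
  rw [abs_le]
  constructor <;> linarith [csSup_le (hK.image f) hub]

lemma abs_sum_abs_sub_sum_abs_le_card_mul_norm {q : ℕ} (y z : Fin q → ℝ) :
    |(∑ i, |y i|) - (∑ i, |z i|)| ≤ q * ‖y - z‖ := by
  rw [← Finset.sum_sub_distrib]
  calc |∑ i, (|y i| - |z i|)| ≤ ∑ i, |(y - z) i| :=
        (Finset.abs_sum_le_sum_abs _ _).trans
          (Finset.sum_le_sum fun i _ => abs_abs_sub_abs_le (y i) (z i))
    _ ≤ ∑ _i : Fin q, ‖y - z‖ := Finset.sum_le_sum fun i _ => norm_le_pi_norm (y - z) i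
    _ = q * ‖y - z‖ := by simp

lemma isLittleO_sum_abs_sub_sum_abs_mulVec {d q : ℕ} {t : (Fin d → ℝ) → (Fin q → ℝ)}
    {X : Fin d → ℝ} {J : Matrix (Fin q) (Fin d) ℝ}
    (ht : HasFDerivAt t (LinearMap.toContinuousLinearMap J.mulVecLin) X) :
    (fun Δ => ∑ i, |t (X + Δ) i - t X i| - ∑ i, |(J *ᵥ Δ) i|) =o[𝓝 0] fun Δ => ‖Δ‖ := by
  refine isLittleO_norm_right.2 <| IsBigO.trans_isLittleO ?_
    (hasFDerivAt_iff_isLittleO_nhds_zero.1 ht)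
  refine IsBigO.of_bound q (Eventually.of_forall fun Δ => ?_)
  simpa using abs_sum_abs_sub_sum_abs_le_card_mul_norm (t (X + Δ) - t X) (J *ᵥ Δ)

lemma tendsto_sSup_image_pnorm_le_div {n : ℕ} {p : ℝ} (hp : 0 < p) {F G : (Fin n → ℝ) → ℝ}
    (hFG : (fun Δ => F Δ - G Δ) =o[𝓝 0] fun Δ => ‖Δ‖) {M : ℝ}
    (hG : ∀ ρ, 0 < ρ → IsLUB (G '' {Δ | pnorm p Δ ≤ ρ}) (M * ρ)) :
    Tendsto (fun ρ => sSup (F '' {Δ | pnorm p Δ ≤ ρ}) / ρ) (𝓝[>] 0) (𝓝 M) := by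
  have hsmall : (fun ρ => sSup (F '' {Δ | pnorm p Δ ≤ ρ}) - M * ρ) =o[𝓝[>] 0] fun ρ => ρ := by
    refine IsLittleO.of_bound fun c hc => ?_
    obtain ⟨r, hr, hbound⟩ := Metric.eventually_nhds_iff.1 (hFG.def hc)
    filter_upwards [Ioo_mem_nhdsGT hr] with ρ ⟨hρ, hρr⟩
    refine abs_sSup_image_sub_le (hG ρ hρ) fun Δ (hΔ : pnorm p Δ ≤ ρ) => ?_
    have hΔρ : ‖Δ‖ ≤ ρ := (norm_le_pnorm hp Δ).trans hΔ
    calc |F Δ - G Δ| ≤ c * ‖‖Δ‖‖ := hbound (by rw [dist_zero_right]; linarith)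
      _ ≤ c * ‖ρ‖ := by rw [norm_norm, norm_of_nonneg hρ.le]; gcongr
  have hlim := hsmall.tendsto_div_nhds_zero.const_add M
  rw [add_zero] at hlim
  refine hlim.congr' ?_
  filter_upwards [self_mem_nhdsWithin] with ρ (hρ : 0 < ρ)
  field_simp
  ring

theorem stmt3_general (d q : ℕ) (hd : 0 < d)
    (t : (Fin d → ℝ) → (Fin q → ℝ)) (X : Fin d → ℝ) (J : Matrix (Fin q) (Fin d) ℝ)
    (ht : HasFDerivAt t (LinearMap.toContinuousLinearMap J.mulVecLin) X)
    (p : ℝ) (hp : 1 < p) :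
    Tendsto
      (fun δ : ℝ => (1 / δ) *
        sSup ((fun Δ : Fin d → ℝ => ∑ i, |t (X + Δ) i - t X i|) ''
          {Δ | ∑ j, |Δ j| ^ p ≤ d * δ ^ p}))
      (nhdsWithin 0 (Set.Ioi 0))
      (nhds ((d : ℝ) ^ (1 / p) *
        ⨆ σ : Fin q → Bool, pnorm (p / (p - 1)) (fun j => ∑ i, signVec σ i * J i j))) := by
  have hp0 : 0 < p := by linarith
  set κ : ℝ := (d : ℝ) ^ (1 / p)
  have hκ : 0 < κ := by positivity
  have hball : ∀ δ, 0 < δ → {Δ : Fin d → ℝ | ∑ j, |Δ j| ^ p ≤ d * δ ^ p} =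
      {Δ | pnorm p Δ ≤ κ * δ} := by
    intro δ hδ
    ext Δ
    rw [Set.mem_ofPred_eq, Set.mem_ofPred_eq, pnorm_le_iff hp0 (by positivity),
      mul_rpow (by positivity) hδ.le, ← rpow_mul (Nat.cast_nonneg d), one_div_mul_cancel hp0.ne',
      rpow_one]
  have hlim := tendsto_sSup_image_pnorm_le_div hp0 (isLittleO_sum_abs_sub_sum_abs_mulVec ht)
    fun ρ hρ => isLUB_sum_abs_mulVec J hp hρ.le
  have hscale : Tendsto (κ * ·) (𝓝[>] 0) (𝓝[>] 0) :=
    tendsto_comap.mono_left (comap_mulLeft_nhdsGT_zero hκ).ge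
  refine ((hlim.comp hscale).const_mul κ).congr' ?_
  filter_upwards [self_mem_nhdsWithin] with δ (hδ : 0 < δ)
  simp only [Function.comp_apply, hball δ hδ]
  field_simp

/-- Theorem 1, limit form: if `t : ℝ^d → ℝ^q` is Fréchet differentiable at `X`
with Jacobian matrix `J`, and `p > 1`, then
`(1/δ)·sup{ ‖t(X+Δ) − t(X)‖₁ : ‖Δ‖_p^p ≤ d·δ^p }` converges, as `δ ↓ 0`, to
`d^{1/p}·max_{σ ∈ {-1,1}^q} ‖σᵀ J‖_{p/(p-1)}`. -/
theorem stmt3 (d q : ℕ) (hd : 0 < d) (hq : 0 < q)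
    (t : (Fin d → ℝ) → (Fin q → ℝ)) (X : Fin d → ℝ) (J : Matrix (Fin q) (Fin d) ℝ)
    (ht : HasFDerivAt t (LinearMap.toContinuousLinearMap J.mulVecLin) X)
    (p : ℝ) (hp : 1 < p) :
    Tendsto
      (fun δ : ℝ => (1 / δ) *
        sSup ((fun Δ : Fin d → ℝ => ∑ i, |t (X + Δ) i - t X i|) ''
          {Δ | ∑ j, |Δ j| ^ p ≤ d * δ ^ p}))
      (nhdsWithin 0 (Set.Ioi 0))
      (nhds ((d : ℝ) ^ (1 / p) *
        ⨆ σ : Fin q → Bool, pnorm (p / (p - 1)) (fun j => ∑ i, signVec σ i * J i j))) :=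
  stmt3_general d q hd t X J ht p hp
end

section
/- (Proposition 2, lower bound.) Let N be a positive integer, p > 1, and let u₁, …, u_N, v₁, …, v_N, z₁, …, z_N be real numbers. Set a = Σₙ uₙ, b = Σₙ zₙuₙ, c = Σₙ vₙ, d = Σₙ zₙvₙ, and suppose ad − bc ≠ 0. Then (N^{1/p}/|ad − bc|)·max over s ∈ {−1, 1} of (Σ_{n=1}^N |(d − s·c)·uₙ + (s·a − b)·vₙ|^{p/(p−1)})^{(p−1)/p} ≥ 1. -/
/-! The weights `wₙ = (d - c)uₙ + (a - b)vₙ` of the branch `s = 1` sum to `ad - bc`, and Hölder's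
inequality against the constant vector `1` bounds `|∑ wₙ|` by `N^{1/p} ‖w‖_{p/(p-1)}`. -/

theorem Real.abs_sum_le_card_rpow_mul_Lq {ι : Type*} (s : Finset ι) (f : ι → ℝ) {p q : ℝ}
    (hpq : p.HolderConjugate q) :
    |∑ i ∈ s, f i| ≤ (s.card : ℝ) ^ (1 / p) * (∑ i ∈ s, |f i| ^ q) ^ (1 / q) := by
  have hHolder := Real.inner_le_Lp_mul_Lq s (fun _ => (1 : ℝ)) (fun i => |f i|) hpq
  simp only [one_mul, abs_one, Real.one_rpow, Finset.sum_const, nsmul_eq_mul, mul_one,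
    abs_abs] at hHolder
  exact (Finset.abs_sum_le_sum_abs f s).trans hHolder

theorem stmt6_general (N : ℕ) (p : ℝ) (hp : 1 < p)
    (u v : Fin N → ℝ) (a b c d : ℝ)
    (ha : a = ∑ n, u n)
    (hc : c = ∑ n, v n)
    (hdet : a * d - b * c ≠ 0) :
    1 ≤ ((N : ℝ) ^ (1 / p) / |a * d - b * c|) *
      max ((∑ n, |(d - 1 * c) * u n + (1 * a - b) * v n| ^ (p / (p - 1))) ^ ((p - 1) / p))
        ((∑ n, |(d - (-1) * c) * u n + ((-1) * a - b) * v n| ^ (p / (p - 1))) ^ ((p - 1) / p)) := by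
  have hsum : ∑ n, ((d - 1 * c) * u n + (1 * a - b) * v n) = a * d - b * c := by
    rw [Finset.sum_add_distrib, ← Finset.mul_sum, ← Finset.mul_sum, ← ha, ← hc]
    ring
  have hHolder := Real.abs_sum_le_card_rpow_mul_Lq (q := p / (p - 1)) Finset.univ
    (fun n => (d - 1 * c) * u n + (1 * a - b) * v n) (Real.HolderConjugate.conjExponent hp)
  rw [hsum, Finset.card_univ, Fintype.card_fin, one_div_div] at hHolder
  rw [div_mul_eq_mul_div, le_div_iff₀ (abs_pos.2 hdet), one_mul]
  exact hHolder.trans (by gcongr; exact le_max_left _ _)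

/-- Proposition 2, lower bound: with `a = ∑ uₙ`, `b = ∑ zₙuₙ`, `c = ∑ vₙ`,
`d = ∑ zₙvₙ` and `ad − bc ≠ 0`, the adversarial influence function expression
`(N^{1/p}/|ad−bc|)·max_{s∈{−1,1}} (∑ₙ |(d−s·c)uₙ + (s·a−b)vₙ|^{p/(p−1)})^{(p−1)/p}`
is at least `1`. -/
theorem stmt6 (N : ℕ) (hN : 0 < N) (p : ℝ) (hp : 1 < p)
    (u v z : Fin N → ℝ) (a b c d : ℝ)
    (ha : a = ∑ n, u n) (hb : b = ∑ n, z n * u n)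
    (hc : c = ∑ n, v n) (hd : d = ∑ n, z n * v n)
    (hdet : a * d - b * c ≠ 0) :
    1 ≤ ((N : ℝ) ^ (1 / p) / |a * d - b * c|) *
      max ((∑ n, |(d - 1 * c) * u n + (1 * a - b) * v n| ^ (p / (p - 1))) ^ ((p - 1) / p))
        ((∑ n, |(d - (-1) * c) * u n + ((-1) * a - b) * v n| ^ (p / (p - 1))) ^ ((p - 1) / p)) :=
  stmt6_general N p hp u v a b c d ha hc hdet
end

section
/- Let Z₁, Z₂, … be i.i.d. real random variables with common law F₀, let θ₁ ∈ ℝ and θ₂ > 0, and set Xₙ = θ₁ + θ₂Zₙ. Let g : ℝ → ℝ be continuous, and suppose there exists a measurable K : ℝ → [0, ∞) with E[K(Z₁)] < ∞ such that |g((x − t)/s)| ≤ K((x − θ₁)/θ₂) for all x and all (t, s) in some neighborhood of (θ₁, θ₂). Let T_N and S_N be random sequences with T_N → θ₁ almost surely and S_N → θ₂ almost surely. Then (1/N)·Σ_{n=1}^N g((Xₙ − T_N)/S_N) → E[g(Z₁)] almost surely as N → ∞. -/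
open Real Filter MeasureTheory ProbabilityTheory

open Set Topology

/-!
Write the summands as `g ((θ₁ + θ₂ Zₙ - t) / s)` at `(t, s) = (T_N, S_N)`. Once `(t, s)` is near
`(θ₁, θ₂)`, they are within `1 / (k + 1)` of `g Zₙ` when `|Zₙ| ≤ k` (uniform continuity on a
compact set) and within `2 K Zₙ` otherwise. So the average differs from the average of `g Zₙ` by
at most the average of `1 / (k + 1) + 2 K 1{|z| > k}` at the `Zₙ`; by the strong law this tends to
its `F₀`-mean, which tends to `0` as `k → ∞` by dominated convergence.
-/

theorem tendsto_of_forall_eventually_dist_le {ι κ α : Type*} [PseudoMetricSpace α]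
    {l : Filter ι} {l' : Filter κ} [l'.NeBot] {a b : ι → α} {x : α} {e : κ → ι → ℝ}
    {m : κ → ℝ} (hb : Tendsto b l (𝓝 x)) (he : ∀ k, Tendsto (e k) l (𝓝 (m k)))
    (hm : Tendsto m l' (𝓝 0)) (hab : ∀ k, ∀ᶠ i in l, dist (a i) (b i) ≤ e k i) :
    Tendsto a l (𝓝 x) := by
  refine Metric.tendsto_nhds.2 fun ε hε => ?_
  obtain ⟨k, hk⟩ := (hm.eventually (gt_mem_nhds (by linarith : (0 : ℝ) < ε / 3))).exists
  filter_upwards [hab k, (he k).eventually (gt_mem_nhds (by linarith : m k < m k + ε / 3)),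
    Metric.tendsto_nhds.1 hb (ε / 3) (by linarith)] with i hab hek hbx
  linarith [dist_triangle (a i) (b i) x]

theorem ae_tendsto_average_comp {Ω E : Type*} [MeasurableSpace Ω] [MeasurableSpace E]
    {μ : Measure Ω} {Z : ℕ → Ω → E} (hZ : ∀ n, Measurable (Z n))
    (hindep : Pairwise fun i j => IndepFun (Z i) (Z j) μ) {ν : Measure E}
    (hid : ∀ n, μ.map (Z n) = ν) {f : E → ℝ} (hf : Measurable f) (hfi : Integrable f ν) :
    ∀ᵐ ω ∂μ, Tendsto (fun N : ℕ => (∑ n ∈ Finset.range N, f (Z n ω)) / N) atTop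
      (𝓝 (∫ z, f z ∂ν)) := by
  have hint : Integrable (fun ω => f (Z 0 ω)) μ :=
    (integrable_map_measure hf.aestronglyMeasurable (hZ 0).aemeasurable).1 (hid 0 ▸ hfi)
  have hmean : ∫ ω, f (Z 0 ω) ∂μ = ∫ z, f z ∂ν := by
    rw [← hid 0, integral_map (hZ 0).aemeasurable hf.aestronglyMeasurable]
  have hident : ∀ n, IdentDistrib (Z n) (Z 0) μ μ := fun n =>
    ⟨(hZ n).aemeasurable, (hZ 0).aemeasurable, by rw [hid n, hid 0]⟩
  simpa only [hmean] using strong_law_ae_real (fun n ω => f (Z n ω)) hint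
    (fun i j hij => (hindep hij).comp hf hf) (fun n => (hident n).comp hf)

theorem eventually_forall_Icc_abs_comp_locScale_sub_lt {g : ℝ → ℝ} (hg : Continuous g)
    {θ₁ θ₂ : ℝ} (hθ₂ : 0 < θ₂) (M : ℝ) {ε : ℝ} (hε : 0 < ε) :
    ∀ᶠ p : ℝ × ℝ in 𝓝 (θ₁, θ₂), ∀ z ∈ Icc (-M) M,
      |g ((θ₁ + θ₂ * z - p.1) / p.2) - g z| < ε := by
  set s : Set (ℝ × ℝ) := {p | 0 < p.2}
  have hcont : ContinuousOn (Function.uncurry fun (p : ℝ × ℝ) (z : ℝ) =>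
      g ((θ₁ + θ₂ * z - p.1) / p.2)) (s ×ˢ Icc (-M) M) := fun q hq =>
    (hg.continuousAt.comp ((by fun_prop : Continuous fun q : (ℝ × ℝ) × ℝ =>
      θ₁ + θ₂ * q.2 - q.1.1).continuousAt.div (by fun_prop) hq.1.ne')).continuousWithinAt
  obtain ⟨v, hv, hvε⟩ := isCompact_Icc.mem_uniformity_of_prod hcont
    (show (θ₁, θ₂) ∈ s from hθ₂) (Metric.dist_mem_uniformity hε)
  rw [(isOpen_lt continuous_const continuous_snd).nhdsWithin_eq (show (θ₁, θ₂) ∈ s from hθ₂)]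
    at hv
  filter_upwards [hv] with p hp z hz
  have hdist : dist _ _ < ε := hvε p hp z hz
  simpa only [add_sub_cancel_left, mul_div_cancel_left₀ _ hθ₂.ne', Real.dist_eq] using hdist

noncomputable def truncationBound (K : ℝ → ℝ) (k : ℕ) (z : ℝ) : ℝ :=
  1 / (k + 1) + 2 * {x : ℝ | (k : ℝ) < |x|}.indicator K z

theorem measurableSet_lt_abs (a : ℝ) : MeasurableSet {x : ℝ | a < |x|} :=
  measurableSet_lt measurable_const measurable_abs

theorem measurable_truncationBound {K : ℝ → ℝ} (hK : Measurable K) (k : ℕ) :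
    Measurable (truncationBound K k) :=
  measurable_const.add ((hK.indicator (measurableSet_lt_abs k)).const_mul 2)

theorem integrable_truncationBound {ν : Measure ℝ} [IsFiniteMeasure ν] {K : ℝ → ℝ}
    (hK : Integrable K ν) (k : ℕ) : Integrable (truncationBound K k) ν :=
  (integrable_const _).add ((hK.indicator (measurableSet_lt_abs k)).const_mul 2)

theorem abs_sub_le_truncationBound {u v K : ℝ → ℝ} {k : ℕ} (hu : ∀ z, |u z| ≤ K z)
    (hv : ∀ z, |v z| ≤ K z) (huv : ∀ z ∈ Icc (-(k : ℝ)) k, |u z - v z| < 1 / (k + 1))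
    (z : ℝ) : |u z - v z| ≤ truncationBound K k z := by
  unfold truncationBound
  by_cases hz : (k : ℝ) < |z|
  · rw [indicator_of_mem (show z ∈ {x : ℝ | (k : ℝ) < |x|} from hz)]
    have : (0 : ℝ) < 1 / (k + 1) := by positivity
    linarith [abs_sub (u z) (v z), hu z, hv z]
  · rw [indicator_of_notMem (show z ∉ {x : ℝ | (k : ℝ) < |x|} from hz), mul_zero, add_zero]
    exact (huv z (abs_le.1 (not_lt.1 hz))).le

theorem tendsto_integral_truncationBound {ν : Measure ℝ} [IsFiniteMeasure ν] {K : ℝ → ℝ}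
    (hK : Integrable K ν) :
    Tendsto (fun k : ℕ => ∫ z, truncationBound K k z ∂ν) atTop (𝓝 0) := by
  have hlim : ∀ z, Tendsto (fun k : ℕ => truncationBound K k z) atTop (𝓝 0) := by
    intro z
    have htail : ∀ᶠ k : ℕ in atTop, {x : ℝ | (k : ℝ) < |x|}.indicator K z = 0 := by
      filter_upwards [eventually_ge_atTop ⌈|z|⌉₊] with k hk
      exact indicator_of_notMem (show z ∉ {x : ℝ | (k : ℝ) < |x|} from
        not_lt.2 (Nat.ceil_le.1 hk)) K
    simpa [truncationBound] using tendsto_one_div_add_atTop_nhds_zero_nat.add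
      (((tendsto_congr' htail).2 tendsto_const_nhds).const_mul 2)
  have hbound : ∀ k : ℕ, ∀ z, ‖truncationBound K k z‖ ≤ 1 + 2 * |K z| := by
    intro k z
    have hk : |1 / ((k : ℝ) + 1)| ≤ 1 := by
      rw [abs_of_pos (by positivity)]
      exact div_le_one_of_le₀ (by linarith [k.cast_nonneg (α := ℝ)]) (by positivity)
    calc ‖truncationBound K k z‖
        ≤ |1 / ((k : ℝ) + 1)| + 2 * |{x : ℝ | (k : ℝ) < |x|}.indicator K z| := by
          rw [Real.norm_eq_abs, truncationBound]
          exact (abs_add_le _ _).trans_eq (by rw [abs_mul, abs_two])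
      _ ≤ 1 + 2 * |K z| := by
          have hind := norm_indicator_le_norm_self (s := {x : ℝ | (k : ℝ) < |x|}) (f := K) (a := z)
          rw [Real.norm_eq_abs, Real.norm_eq_abs] at hind
          linarith
  simpa using tendsto_integral_of_dominated_convergence (fun z => 1 + 2 * |K z|)
    (fun k => (integrable_truncationBound hK k).aestronglyMeasurable)
    ((integrable_const 1).add (hK.abs.const_mul 2)) (fun k => ae_of_all _ (hbound k))
    (ae_of_all _ hlim)

theorem dist_average_le_average {α : Type*} {u v h : α → ℝ} (huv : ∀ z, |u z - v z| ≤ h z)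
    (x : ℕ → α) (N : ℕ) :
    dist ((∑ n ∈ Finset.range N, u (x n)) / N) ((∑ n ∈ Finset.range N, v (x n)) / N) ≤
      (∑ n ∈ Finset.range N, h (x n)) / N := by
  rw [Real.dist_eq, ← sub_div, ← Finset.sum_sub_distrib, abs_div, Nat.abs_cast]
  gcongr
  exact (Finset.abs_sum_le_sum_abs _ _).trans (Finset.sum_le_sum fun n _ => huv (x n))

theorem stmt9_general {Ω : Type*} [MeasurableSpace Ω] (μ : Measure Ω) [IsProbabilityMeasure μ]
    (Z : ℕ → Ω → ℝ) (hZmeas : ∀ n, Measurable (Z n))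
    (hindep : iIndepFun (m := fun _ => Real.measurableSpace) Z μ)
    (F₀ : Measure ℝ) (hid : ∀ n, Measure.map (Z n) μ = F₀)
    (θ₁ θ₂ : ℝ) (hθ₂ : 0 < θ₂)
    (X : ℕ → Ω → ℝ) (hX : ∀ n ω, X n ω = θ₁ + θ₂ * Z n ω)
    (g : ℝ → ℝ) (hg : Continuous g)
    (K : ℝ → ℝ) (hKmeas : Measurable K)
    (hKint : Integrable (fun ω => K (Z 0 ω)) μ)
    (hdom : ∃ U ∈ nhds (θ₁, θ₂), ∀ x : ℝ, ∀ ts ∈ U,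
      |g ((x - Prod.fst ts) / Prod.snd ts)| ≤ K ((x - θ₁) / θ₂))
    (T S : ℕ → Ω → ℝ)
    (hT : ∀ᵐ ω ∂μ, Tendsto (fun N => T N ω) atTop (nhds θ₁))
    (hS : ∀ᵐ ω ∂μ, Tendsto (fun N => S N ω) atTop (nhds θ₂)) :
    ∀ᵐ ω ∂μ, Tendsto
      (fun N : ℕ => (1 / (N : ℝ)) * ∑ n ∈ Finset.range N, g ((X n ω - T N ω) / S N ω))
      atTop (nhds (∫ z, g z ∂F₀)) := by
  obtain ⟨U, hU, hUdom⟩ := hdom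
  have hFK : ∀ p ∈ U, ∀ z, |g ((θ₁ + θ₂ * z - p.1) / p.2)| ≤ K z := fun p hp z => by
    simpa only [add_sub_cancel_left, mul_div_cancel_left₀ _ hθ₂.ne'] using hUdom (θ₁ + θ₂ * z) p hp
  have hgK : ∀ z, |g z| ≤ K z := fun z => by
    simpa only [add_sub_cancel_left, mul_div_cancel_left₀ _ hθ₂.ne'] using
      hFK _ (mem_of_mem_nhds hU) z
  have : IsProbabilityMeasure F₀ := hid 0 ▸ Measure.isProbabilityMeasure_map (hZmeas 0).aemeasurable
  have hKF₀ : Integrable K F₀ :=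
    hid 0 ▸ (integrable_map_measure hKmeas.aestronglyMeasurable (hZmeas 0).aemeasurable).2 hKint
  have hgF₀ : Integrable g F₀ :=
    hKF₀.mono' hg.aestronglyMeasurable (ae_of_all _ fun z => (Real.norm_eq_abs _).trans_le (hgK z))
  have hpair : Pairwise fun i j => IndepFun (Z i) (Z j) μ := fun i j hij => hindep.indepFun hij
  filter_upwards [hT, hS, ae_tendsto_average_comp hZmeas hpair hid hg.measurable hgF₀,
    ae_all_iff.2 fun k => ae_tendsto_average_comp hZmeas hpair hid
      (measurable_truncationBound hKmeas k) (integrable_truncationBound hKF₀ k)]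
    with ω hTω hSω hgω hboundω
  simp only [hX, one_div_mul_eq_div]
  refine tendsto_of_forall_eventually_dist_le hgω hboundω
    (tendsto_integral_truncationBound hKF₀) fun k => ?_
  filter_upwards [(hTω.prodMk_nhds hSω).eventually (inter_mem hU
    (eventually_forall_Icc_abs_comp_locScale_sub_lt hg hθ₂ k (ε := 1 / ((k : ℝ) + 1)) (by positivity)))]
    with N ⟨hNU, hNk⟩
  exact dist_average_le_average (abs_sub_le_truncationBound (hFK _ hNU) hgK hNk) _ N

/-- uniform strong law step: let `Zₙ` be i.i.d. with law `F₀`,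
`Xₙ = θ₁ + θ₂Zₙ` with `θ₂ > 0`, `g` continuous and dominated by an integrable envelope `K`
uniformly over `(t, s)` in a neighborhood of `(θ₁, θ₂)`, and `T_N → θ₁`, `S_N → θ₂` a.s.
Then `(1/N)·∑_{n<N} g((Xₙ − T_N)/S_N) → E[g(Z₁)]` almost surely. -/
theorem stmt9 {Ω : Type*} [MeasurableSpace Ω] (μ : Measure Ω) [IsProbabilityMeasure μ]
    (Z : ℕ → Ω → ℝ) (hZmeas : ∀ n, Measurable (Z n))
    (hindep : iIndepFun (m := fun _ => Real.measurableSpace) Z μ)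
    (F₀ : Measure ℝ) (hid : ∀ n, Measure.map (Z n) μ = F₀)
    (θ₁ θ₂ : ℝ) (hθ₂ : 0 < θ₂)
    (X : ℕ → Ω → ℝ) (hX : ∀ n ω, X n ω = θ₁ + θ₂ * Z n ω)
    (g : ℝ → ℝ) (hg : Continuous g)
    (K : ℝ → ℝ) (hKmeas : Measurable K) (hKnonneg : ∀ x, 0 ≤ K x)
    (hKint : Integrable (fun ω => K (Z 0 ω)) μ)
    (hdom : ∃ U ∈ nhds (θ₁, θ₂), ∀ x : ℝ, ∀ ts ∈ U,
      |g ((x - Prod.fst ts) / Prod.snd ts)| ≤ K ((x - θ₁) / θ₂))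
    (T S : ℕ → Ω → ℝ)
    (hT : ∀ᵐ ω ∂μ, Tendsto (fun N => T N ω) atTop (nhds θ₁))
    (hS : ∀ᵐ ω ∂μ, Tendsto (fun N => S N ω) atTop (nhds θ₂)) :
    ∀ᵐ ω ∂μ, Tendsto
      (fun N : ℕ => (1 / (N : ℝ)) * ∑ n ∈ Finset.range N, g ((X n ω - T N ω) / S N ω))
      atTop (nhds (∫ z, g z ∂F₀)) :=
  stmt9_general μ Z hZmeas hindep F₀ hid θ₁ θ₂ hθ₂ X hX g hg K hKmeas hKint hdom T S hT hS
end

section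
/- Let Z be a real random variable with E[Z²] < ∞ and E[Z²] > 0, and let φ₁, φ₂ : ℝ → ℝ be measurable with E[φ₁(Z)²] < ∞, E[φ₂(Z)²] < ∞, E[φ₁(Z)] ≠ 0, and E[Z·φ₂(Z)] ≠ 0. Then E[φ₁(Z)²]/(E[φ₁(Z)])² + E[φ₂(Z)²]/(E[Z·φ₂(Z)])² ≥ 1 + 1/E[Z²]. -/
/-!
Both terms are bounded by Cauchy–Schwarz: `E[φ₁(Z)]² = E[1 · φ₁(Z)]² ≤ E[φ₁(Z)²]` and
`E[Z φ₂(Z)]² ≤ E[Z²] E[φ₂(Z)²]`.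
-/

open Real MeasureTheory

section CauchySchwarz

variable {α : Type*} [MeasurableSpace α] {μ : Measure α} {f g : α → ℝ}

/-- No measurability of `f` or `g` is needed: the quadratic `t ↦ ∫ (t f + g)²` only involves
the integrable functions `f²`, `f g` and `g²`. -/
theorem sq_integral_mul_le_integral_sq_mul_integral_sq
    (hf : Integrable (fun x => f x ^ 2) μ) (hg : Integrable (fun x => g x ^ 2) μ)
    (hfg : Integrable (fun x => f x * g x) μ) :
    (∫ x, f x * g x ∂μ) ^ 2 ≤ (∫ x, f x ^ 2 ∂μ) * ∫ x, g x ^ 2 ∂μ := by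
  have hquad : ∀ t : ℝ, 0 ≤ (∫ x, f x ^ 2 ∂μ) * (t * t) + 2 * (∫ x, f x * g x ∂μ) * t
      + ∫ x, g x ^ 2 ∂μ := fun t => by
    have hexpand : ∫ x, (t * f x + g x) ^ 2 ∂μ = (∫ x, f x ^ 2 ∂μ) * (t * t)
        + 2 * (∫ x, f x * g x ∂μ) * t + ∫ x, g x ^ 2 ∂μ := by
      have hsplit : (fun x => (t * f x + g x) ^ 2)
          = fun x => (t * t) * f x ^ 2 + (2 * t) * (f x * g x) + g x ^ 2 := by
        ext x; ring
      have hlin : Integrable (fun x => (t * t) * f x ^ 2 + (2 * t) * (f x * g x)) μ :=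
        (hf.const_mul _).add (hfg.const_mul _)
      rw [hsplit, integral_add hlin hg, integral_add (hf.const_mul _) (hfg.const_mul _),
        integral_const_mul, integral_const_mul]
      ring
    exact hexpand ▸ integral_nonneg fun x => sq_nonneg _
  have hdisc := discrim_le_zero hquad
  rw [discrim] at hdisc
  linarith

variable (μ) in
theorem one_div_integral_sq_le_integral_sq_div_sq_integral_mul
    (hf : Integrable (fun x => f x ^ 2) μ) (hg : Integrable (fun x => g x ^ 2) μ)
    (hfg : ∫ x, f x * g x ∂μ ≠ 0) :
    1 / ∫ x, f x ^ 2 ∂μ ≤ (∫ x, g x ^ 2 ∂μ) / (∫ x, f x * g x ∂μ) ^ 2 := by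
  have hcs := sq_integral_mul_le_integral_sq_mul_integral_sq hf hg
    (Integrable.of_integral_ne_zero hfg)
  have hfg_sq : 0 < (∫ x, f x * g x ∂μ) ^ 2 := by positivity
  have hf_pos : 0 < ∫ x, f x ^ 2 ∂μ :=
    pos_of_mul_pos_left (hfg_sq.trans_le hcs) (integral_nonneg fun x => sq_nonneg _)
  rw [div_le_div_iff₀ hf_pos hfg_sq]
  linarith

end CauchySchwarz

theorem stmt11_general {Ω : Type*} [MeasurableSpace Ω] (μ : Measure Ω) [IsProbabilityMeasure μ]
    (Z : Ω → ℝ)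
    (hZ2 : Integrable (fun ω => (Z ω) ^ 2) μ)
    (φ₁ φ₂ : ℝ → ℝ)
    (h1 : Integrable (fun ω => (φ₁ (Z ω)) ^ 2) μ)
    (h2 : Integrable (fun ω => (φ₂ (Z ω)) ^ 2) μ)
    (h3 : (∫ ω, φ₁ (Z ω) ∂μ) ≠ 0)
    (h4 : (∫ ω, Z ω * φ₂ (Z ω) ∂μ) ≠ 0) :
    (∫ ω, (φ₁ (Z ω)) ^ 2 ∂μ) / (∫ ω, φ₁ (Z ω) ∂μ) ^ 2 +
      (∫ ω, (φ₂ (Z ω)) ^ 2 ∂μ) / (∫ ω, Z ω * φ₂ (Z ω) ∂μ) ^ 2 ≥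
      1 + 1 / ∫ ω, (Z ω) ^ 2 ∂μ := by
  have hlocation : 1 ≤ (∫ ω, (φ₁ (Z ω)) ^ 2 ∂μ) / (∫ ω, φ₁ (Z ω) ∂μ) ^ 2 := by
    simpa using one_div_integral_sq_le_integral_sq_div_sq_integral_mul μ (f := fun _ => 1)
      (by simp) h1 (by simpa using h3)
  have hscale := one_div_integral_sq_le_integral_sq_div_sq_integral_mul μ hZ2 h2 h4
  linarith

/-- for a real random variable `Z` with `0 < E[Z²] < ∞` and measurable
`φ₁, φ₂` with `E[φ₁(Z)²] < ∞`, `E[φ₂(Z)²] < ∞`, `E[φ₁(Z)] ≠ 0`, `E[Z·φ₂(Z)] ≠ 0`, one has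
`E[φ₁(Z)²]/E[φ₁(Z)]² + E[φ₂(Z)²]/E[Z·φ₂(Z)]² ≥ 1 + 1/E[Z²]`. -/
theorem stmt11 {Ω : Type*} [MeasurableSpace Ω] (μ : Measure Ω) [IsProbabilityMeasure μ]
    (Z : Ω → ℝ) (hZ : Measurable Z)
    (hZ2 : Integrable (fun ω => (Z ω) ^ 2) μ) (hZ2pos : 0 < ∫ ω, (Z ω) ^ 2 ∂μ)
    (φ₁ φ₂ : ℝ → ℝ) (hφ₁ : Measurable φ₁) (hφ₂ : Measurable φ₂)
    (h1 : Integrable (fun ω => (φ₁ (Z ω)) ^ 2) μ)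
    (h2 : Integrable (fun ω => (φ₂ (Z ω)) ^ 2) μ)
    (h3 : (∫ ω, φ₁ (Z ω) ∂μ) ≠ 0)
    (h4 : (∫ ω, Z ω * φ₂ (Z ω) ∂μ) ≠ 0) :
    (∫ ω, (φ₁ (Z ω)) ^ 2 ∂μ) / (∫ ω, φ₁ (Z ω) ∂μ) ^ 2 +
      (∫ ω, (φ₂ (Z ω)) ^ 2 ∂μ) / (∫ ω, Z ω * φ₂ (Z ω) ∂μ) ^ 2 ≥
      1 + 1 / ∫ ω, (Z ω) ^ 2 ∂μ :=
  stmt11_general μ Z hZ2 φ₁ φ₂ h1 h2 h3 h4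
end

section
/- (Theorem 2, location part; KKT sufficiency for problem P1.) Let f₀ be a nonnegative measurable function on (0, ∞) and ξ₁ > 0. Suppose ν* ∈ ℝ and ϑ₁* ≥ 0 are such that the function h*(z) = max(ν* − ϑ₁*/f₀(z), 0) on {z : f₀(z) > 0} (and h*(z) = 0 where f₀(z) = 0) satisfies: ∫₀^∞ h*(z) f₀(z) dz = 1, ∫₀^∞ h*(z) dz ≤ 2ξ₁, the complementary slackness condition ϑ₁*·(∫₀^∞ h*(z) dz − 2ξ₁) = 0, and ∫₀^∞ h*(z)² f₀(z) dz < ∞. Then for every measurable h : (0, ∞) → [0, ∞) with ∫₀^∞ h(z) f₀(z) dz = 1 and ∫₀^∞ h(z) dz ≤ 2ξ₁, one has ∫₀^∞ h(z)² f₀(z) dz ≥ ∫₀^∞ h*(z)² f₀(z) dz. -/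
/-!
`h*` minimises, pointwise in `z` and over `x ≥ 0`, the Lagrangian
`x² f₀ − 2ν x f₀ + 2ϑ x` of the problem: it is the positive part of the vertex `ν − ϑ / f₀` of
this parabola, and where `f₀ = 0` the Lagrangian `2ϑ x` is smallest at `x = 0`. Integrating,
the constraint `∫ h f₀ = 1 = ∫ h* f₀` removes the `ν`-terms, and complementary slackness
gives `ϑ ∫ h ≤ ϑ ∫ h*`, leaving `∫ (h*)² f₀ ≤ ∫ h² f₀`.
-/

open Set MeasureTheory

noncomputable section

def kktOptimum (ν ϑ f : ℝ) : ℝ := if 0 < f then max (ν - ϑ / f) 0 else 0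

lemma kktOptimum_nonneg (ν ϑ f : ℝ) : 0 ≤ kktOptimum ν ϑ f := by
  unfold kktOptimum
  split_ifs
  exacts [le_max_right _ _, le_rfl]

lemma Measurable.kktOptimum {α : Type*} [MeasurableSpace α] {f : α → ℝ} (hf : Measurable f)
    (ν ϑ : ℝ) : Measurable fun z ↦ kktOptimum ν ϑ (f z) :=
  Measurable.ite (measurableSet_lt measurable_const hf)
    ((measurable_const.sub (measurable_const.div hf)).max measurable_const) measurable_const

lemma kktOptimum_isMinOn {ν ϑ f : ℝ} (hϑ : 0 ≤ ϑ) (hf : 0 ≤ f) :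
    IsMinOn (fun x ↦ x ^ 2 * f - 2 * ν * (x * f) + 2 * ϑ * x) (Ici 0) (kktOptimum ν ϑ f) := by
  refine isMinOn_iff.mpr fun x (hx : 0 ≤ x) ↦ ?_
  simp only [kktOptimum]
  split_ifs with hpos
  · have hdiv : ϑ / f * f = ϑ := div_mul_cancel₀ ϑ hpos.ne'
    rcases le_total (ν - ϑ / f) 0 with hc | hc
    · rw [max_eq_right hc]
      nlinarith [mul_nonneg (mul_nonneg hx hf) (neg_nonneg.mpr hc), mul_nonneg (sq_nonneg x) hf]
    · rw [max_eq_left hc]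
      nlinarith [mul_nonneg (sq_nonneg (x - (ν - ϑ / f))) hf]
  · obtain rfl : f = 0 := le_antisymm (not_lt.mp hpos) hf
    nlinarith [mul_nonneg hϑ hx]

section Integral

variable {α : Type*} [MeasurableSpace α] {μ : Measure α}

lemma integral_lagrangian {f g : α → ℝ} (ν ϑ : ℝ) (hg : Integrable g μ)
    (hgf : Integrable (fun z ↦ g z * f z) μ) (hg2f : Integrable (fun z ↦ g z ^ 2 * f z) μ) :
    Integrable (fun z ↦ g z ^ 2 * f z - 2 * ν * (g z * f z) + 2 * ϑ * g z) μ ∧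
      ∫ z, g z ^ 2 * f z - 2 * ν * (g z * f z) + 2 * ϑ * g z ∂μ =
        ∫ z, g z ^ 2 * f z ∂μ - 2 * ν * ∫ z, g z * f z ∂μ + 2 * ϑ * ∫ z, g z ∂μ := by
  have hquad : Integrable (fun z ↦ g z ^ 2 * f z - 2 * ν * (g z * f z)) μ :=
    hg2f.sub (hgf.const_mul _)
  have hlin : Integrable (fun z ↦ 2 * ϑ * g z) μ := hg.const_mul _
  refine ⟨hquad.add hlin, ?_⟩
  rw [integral_add hquad hlin, integral_sub hg2f (hgf.const_mul _), integral_const_mul,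
    integral_const_mul]

theorem integral_sq_mul_le_of_kkt {f s h : α → ℝ} {ν ϑ : ℝ} (hϑ : 0 ≤ ϑ) (hf : 0 ≤ᵐ[μ] f)
    (hs : ∀ᵐ z ∂μ, s z = kktOptimum ν ϑ (f z)) (hh : 0 ≤ᵐ[μ] h)
    (hs_int : Integrable s μ) (hh_int : Integrable h μ)
    (hsf_int : Integrable (fun z ↦ s z * f z) μ) (hhf_int : Integrable (fun z ↦ h z * f z) μ)
    (hs2f_int : Integrable (fun z ↦ s z ^ 2 * f z) μ)
    (hh2f_int : Integrable (fun z ↦ h z ^ 2 * f z) μ)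
    (hmean : ∫ z, h z * f z ∂μ = ∫ z, s z * f z ∂μ)
    (hslack : ϑ * ∫ z, h z ∂μ ≤ ϑ * ∫ z, s z ∂μ) :
    ∫ z, s z ^ 2 * f z ∂μ ≤ ∫ z, h z ^ 2 * f z ∂μ := by
  obtain ⟨hLs_int, hLs⟩ := integral_lagrangian ν ϑ hs_int hsf_int hs2f_int
  obtain ⟨hLh_int, hLh⟩ := integral_lagrangian ν ϑ hh_int hhf_int hh2f_int
  have hpointwise : ∀ᵐ z ∂μ, s z ^ 2 * f z - 2 * ν * (s z * f z) + 2 * ϑ * s z ≤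
      h z ^ 2 * f z - 2 * ν * (h z * f z) + 2 * ϑ * h z := by
    filter_upwards [hs, hf, hh] with z hsz hfz hhz
    rw [hsz]
    exact isMinOn_iff.mp (kktOptimum_isMinOn hϑ hfz) (h z) hhz
  have hlagrangian := integral_mono_ae hLs_int hLh_int hpointwise
  rw [hLs, hLh, hmean] at hlagrangian
  linarith

lemma mul_integral_le_of_slackness {g s : α → ℝ} {ϑ : ℝ} {c : ENNReal} (hc : c ≠ ⊤)
    (hϑ : 0 ≤ ϑ) (hg : 0 ≤ᵐ[μ] g) (hs : 0 ≤ᵐ[μ] s)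
    (hgm : AEStronglyMeasurable g μ) (hsm : AEStronglyMeasurable s μ)
    (hgc : ∫⁻ z, ENNReal.ofReal (g z) ∂μ ≤ c)
    (hslack : ϑ = 0 ∨ ∫⁻ z, ENNReal.ofReal (s z) ∂μ = c) :
    ϑ * ∫ z, g z ∂μ ≤ ϑ * ∫ z, s z ∂μ := by
  rcases hslack with rfl | hsc
  · simp
  refine mul_le_mul_of_nonneg_left ?_ hϑ
  rw [integral_eq_lintegral_of_nonneg_ae hg hgm, integral_eq_lintegral_of_nonneg_ae hs hsm, hsc]
  exact ENNReal.toReal_mono hc hgc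

end Integral

end

theorem stmt12_general (f₀ : ℝ → ℝ) (hf₀m : Measurable f₀) (hf₀ : ∀ z ∈ Set.Ioi (0 : ℝ), 0 ≤ f₀ z)
    (ξ₁ : ℝ) (ν ϑ : ℝ) (hϑ : 0 ≤ ϑ)
    (hstar : ℝ → ℝ)
    (hstar_def : ∀ z, hstar z = if 0 < f₀ z then max (ν - ϑ / f₀ z) 0 else 0)
    (hnorm : (∫ z in Set.Ioi (0 : ℝ), hstar z * f₀ z) = 1)
    (hbound : (∫⁻ z in Set.Ioi (0 : ℝ), ENNReal.ofReal (hstar z)) ≤ ENNReal.ofReal (2 * ξ₁))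
    (hslack : ϑ = 0 ∨
      (∫⁻ z in Set.Ioi (0 : ℝ), ENNReal.ofReal (hstar z)) = ENNReal.ofReal (2 * ξ₁))
    (hfin : (∫⁻ z in Set.Ioi (0 : ℝ), ENNReal.ofReal ((hstar z) ^ 2 * f₀ z)) < ⊤) :
    ∀ h : ℝ → ℝ, Measurable h → (∀ z ∈ Set.Ioi (0 : ℝ), 0 ≤ h z) →
      (∫ z in Set.Ioi (0 : ℝ), h z * f₀ z) = 1 →
      (∫⁻ z in Set.Ioi (0 : ℝ), ENNReal.ofReal (h z)) ≤ ENNReal.ofReal (2 * ξ₁) →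
      (∫⁻ z in Set.Ioi (0 : ℝ), ENNReal.ofReal ((hstar z) ^ 2 * f₀ z)) ≤
        ∫⁻ z in Set.Ioi (0 : ℝ), ENNReal.ofReal ((h z) ^ 2 * f₀ z) := by
  intro h hm hpos hnorm_h hbound_h
  rcases eq_or_ne (∫⁻ z in Ioi 0, ENNReal.ofReal (h z ^ 2 * f₀ z)) ⊤ with htop | htop
  · exact htop ▸ le_top
  set μ := volume.restrict (Ioi (0 : ℝ))
  have hsm : Measurable hstar := funext hstar_def ▸ hf₀m.kktOptimum ν ϑ
  have hf : 0 ≤ᵐ[μ] f₀ := ae_restrict_of_forall_mem measurableSet_Ioi hf₀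
  have hh : 0 ≤ᵐ[μ] h := ae_restrict_of_forall_mem measurableSet_Ioi hpos
  have hs : 0 ≤ᵐ[μ] hstar :=
    .of_forall fun z ↦ (kktOptimum_nonneg ν ϑ (f₀ z)).trans_eq (hstar_def z).symm
  have hs2f : 0 ≤ᵐ[μ] fun z ↦ hstar z ^ 2 * f₀ z := by
    filter_upwards [hf] with z hz using mul_nonneg (sq_nonneg _) hz
  have hh2f : 0 ≤ᵐ[μ] fun z ↦ h z ^ 2 * f₀ z := by
    filter_upwards [hf] with z hz using mul_nonneg (sq_nonneg _) hz
  have hs2f_int : Integrable (fun z ↦ hstar z ^ 2 * f₀ z) μ :=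
    (lintegral_ofReal_ne_top_iff_integrable
      ((hsm.pow_const 2).mul hf₀m).aestronglyMeasurable hs2f).mp hfin.ne
  have hh2f_int : Integrable (fun z ↦ h z ^ 2 * f₀ z) μ :=
    (lintegral_ofReal_ne_top_iff_integrable
      ((hm.pow_const 2).mul hf₀m).aestronglyMeasurable hh2f).mp htop
  rw [← ofReal_integral_eq_lintegral_ofReal hs2f_int hs2f,
    ← ofReal_integral_eq_lintegral_ofReal hh2f_int hh2f]
  refine ENNReal.ofReal_le_ofReal (integral_sq_mul_le_of_kkt hϑ hf (.of_forall hstar_def) hh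
    ((lintegral_ofReal_ne_top_iff_integrable hsm.aestronglyMeasurable hs).mp
      (ne_top_of_le_ne_top ENNReal.ofReal_ne_top hbound))
    ((lintegral_ofReal_ne_top_iff_integrable hm.aestronglyMeasurable hh).mp
      (ne_top_of_le_ne_top ENNReal.ofReal_ne_top hbound_h))
    (integrable_of_integral_eq_one hnorm) (integrable_of_integral_eq_one hnorm_h)
    hs2f_int hh2f_int (hnorm_h.trans hnorm.symm) ?_)
  exact mul_integral_le_of_slackness ENNReal.ofReal_ne_top hϑ hh hs hm.aestronglyMeasurable
    hsm.aestronglyMeasurable hbound_h hslack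

/-- Theorem 2, location part; KKT sufficiency for P1: let `f₀ ≥ 0` be
measurable on `(0,∞)`, `ξ₁ > 0`, `ν* ∈ ℝ`, `ϑ₁* ≥ 0`, and let
`h*(z) = max(ν* − ϑ₁*/f₀(z), 0)` where `f₀(z) > 0` (and `0` where `f₀(z) = 0`).
If `∫₀^∞ h* f₀ = 1`, `∫₀^∞ h* ≤ 2ξ₁`, complementary slackness
`ϑ₁*·(∫₀^∞ h* − 2ξ₁) = 0` holds, and `∫₀^∞ (h*)² f₀ < ∞`, then every measurable
nonnegative `h` with `∫₀^∞ h f₀ = 1` and `∫₀^∞ h ≤ 2ξ₁` satisfies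
`∫₀^∞ h² f₀ ≥ ∫₀^∞ (h*)² f₀`. -/
theorem stmt12 (f₀ : ℝ → ℝ) (hf₀m : Measurable f₀) (hf₀ : ∀ z ∈ Set.Ioi (0 : ℝ), 0 ≤ f₀ z)
    (ξ₁ : ℝ) (hξ₁ : 0 < ξ₁) (ν ϑ : ℝ) (hϑ : 0 ≤ ϑ)
    (hstar : ℝ → ℝ)
    (hstar_def : ∀ z, hstar z = if 0 < f₀ z then max (ν - ϑ / f₀ z) 0 else 0)
    (hnorm : (∫ z in Set.Ioi (0 : ℝ), hstar z * f₀ z) = 1)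
    (hbound : (∫⁻ z in Set.Ioi (0 : ℝ), ENNReal.ofReal (hstar z)) ≤ ENNReal.ofReal (2 * ξ₁))
    (hslack : ϑ = 0 ∨
      (∫⁻ z in Set.Ioi (0 : ℝ), ENNReal.ofReal (hstar z)) = ENNReal.ofReal (2 * ξ₁))
    (hfin : (∫⁻ z in Set.Ioi (0 : ℝ), ENNReal.ofReal ((hstar z) ^ 2 * f₀ z)) < ⊤) :
    ∀ h : ℝ → ℝ, Measurable h → (∀ z ∈ Set.Ioi (0 : ℝ), 0 ≤ h z) →
      (∫ z in Set.Ioi (0 : ℝ), h z * f₀ z) = 1 →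
      (∫⁻ z in Set.Ioi (0 : ℝ), ENNReal.ofReal (h z)) ≤ ENNReal.ofReal (2 * ξ₁) →
      (∫⁻ z in Set.Ioi (0 : ℝ), ENNReal.ofReal ((hstar z) ^ 2 * f₀ z)) ≤
        ∫⁻ z in Set.Ioi (0 : ℝ), ENNReal.ofReal ((h z) ^ 2 * f₀ z) :=
  stmt12_general f₀ hf₀m hf₀ ξ₁ ν ϑ hϑ hstar hstar_def hnorm hbound hslack hfin
end

section
/- (Theorem 2, scale part; KKT sufficiency for problem P2.) Let f₀ be a nonnegative measurable function on (0, ∞), let F₀ : (0, ∞) → [0, 1] be nondecreasing with F₀'(z) = f₀(z) in the sense that F₀(z) = F₀(0⁺) + ∫₀^z f₀, and let ξ ≥ ξ₂ > 0. Suppose ν* ∈ ℝ, ϑ₁* ≥ 0, ϑ₂* ≥ 0 are such that the function g*(z) = max(ν*·z − (ϑ₂* + (ϑ₁* − ϑ₂*)·F₀(z))/f₀(z), 0) on {z : f₀(z) > 0} (and g*(z) = 0 where f₀(z) = 0) satisfies: ∫₀^∞ z·g*(z)·f₀(z) dz = 1, ∫₀^∞ g*(z)·F₀(z) dz ≤ 2ξ₂,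 ∫₀^∞ g*(z)·(1 − F₀(z)) dz ≤ 2ξ, the complementary slackness conditions ϑ₁*·(∫₀^∞ g* F₀ dz − 2ξ₂) = 0 and ϑ₂*·(∫₀^∞ g*(1 − F₀) dz − 2ξ) = 0, and ∫₀^∞ g*(z)² f₀(z) dz < ∞. Then for every measurable g : (0, ∞) → [0, ∞) with ∫₀^∞ z·g·f₀ dz = 1, ∫₀^∞ g·F₀ dz ≤ 2ξ₂, and ∫₀^∞ g·(1 − F₀) dz ≤ 2ξ, one has ∫₀^∞ g(z)² f₀(z) dz ≥ ∫₀^∞ g*(z)² f₀(z) dz. -/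
/-!
Weak duality. At each `z`, the integrand of the Lagrangian
`ℒ(g) = ∫ g² f₀ + 2ϑ₁ ∫ g F₀ + 2ϑ₂ ∫ g (1 - F₀) - 2ν ∫ z g f₀` is the quadratic
`f₀ x² + 2 (c - ν z f₀) x` in `x = g z`, with `c = ϑ₂ + (ϑ₁ - ϑ₂) F₀ ≥ 0`, and `g* z` is its
minimiser over `x ≥ 0`. So `ℒ(g*) ≤ ℒ(g)`. Both normalisations equal `1`, and complementary
slackness together with the constraints on `g` makes the multiplier terms of `g` at most those
of `g*`; cancelling them leaves `∫ g*² f₀ ≤ ∫ g² f₀`.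
-/

open Real Set MeasureTheory
open scoped ENNReal

noncomputable def clippedMinimizer (f c a : ℝ) : ℝ :=
  if 0 < f then max (a - c / f) 0 else 0

theorem clippedMinimizer_nonneg (f c a : ℝ) : 0 ≤ clippedMinimizer f c a := by
  unfold clippedMinimizer; split_ifs <;> simp

theorem isMinOn_clippedMinimizer {f c a : ℝ} (hf : 0 ≤ f) (hc : 0 ≤ c) :
    IsMinOn (fun x => f * x ^ 2 + 2 * (c - a * f) * x) (Ici 0) (clippedMinimizer f c a) := by
  refine isMinOn_iff.2 fun x (hx : 0 ≤ x) => ?_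
  unfold clippedMinimizer
  split_ifs with hf0
  -- with `c = (a - m) f` the quadratic is `f (x - m)² - f m²`
  · obtain ⟨m, rfl⟩ : ∃ m, c = (a - m) * f := ⟨a - c / f, by field_simp; ring⟩
    have hm : a - (a - m) * f / f = m := by field_simp; ring
    rw [hm]
    rcases le_total m 0 with h | h
    · rw [max_eq_right h]; nlinarith [mul_nonneg (mul_nonneg hx (neg_nonneg.2 h)) hf0.le]
    · rw [max_eq_left h]; nlinarith [mul_nonneg hf0.le (sq_nonneg (x - m))]
  · obtain rfl : f = 0 := le_antisymm (not_lt.1 hf0) hf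
    nlinarith

theorem aemeasurable_clippedMinimizer {α : Type*} [MeasurableSpace α] {μ : Measure α}
    {f c a : α → ℝ} (hf : Measurable f) (hc : AEMeasurable c μ) (ha : AEMeasurable a μ) :
    AEMeasurable (fun z => clippedMinimizer (f z) (c z) (a z)) μ := by
  have : (fun z => clippedMinimizer (f z) (c z) (a z)) =
      {z | 0 < f z}.indicator fun z => max (a z - c z / f z) 0 :=
    funext fun z => by simp only [clippedMinimizer, indicator_apply, mem_ofPred_eq]
  rw [this]
  exact AEMeasurable.indicator (by fun_prop) (measurableSet_lt measurable_const hf)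

theorem lintegral_le_of_ae_add_le_add {α : Type*} [MeasurableSpace α] {μ : Measure α}
    {a a' b b' : α → ℝ≥0∞} (ha : AEMeasurable a μ) (h : ∀ᵐ x ∂μ, a' x + b' x ≤ a x + b x)
    (hb : ∫⁻ x, b x ∂μ ≤ ∫⁻ x, b' x ∂μ) (hb_ne_top : ∫⁻ x, b x ∂μ ≠ ∞) :
    ∫⁻ x, a' x ∂μ ≤ ∫⁻ x, a x ∂μ := by
  refine ENNReal.le_of_add_le_add_right hb_ne_top ?_
  calc ∫⁻ x, a' x ∂μ + ∫⁻ x, b x ∂μ ≤ ∫⁻ x, a' x ∂μ + ∫⁻ x, b' x ∂μ := by gcongr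
    _ ≤ ∫⁻ x, a' x + b' x ∂μ := le_lintegral_add _ _
    _ ≤ ∫⁻ x, a x + b x ∂μ := lintegral_mono_ae h
    _ = ∫⁻ x, a x ∂μ + ∫⁻ x, b x ∂μ := lintegral_add_left' ha _

/-- The multiplier terms of `ℒ` at `z`, for the value `x` of the function being evaluated and the
value `y` of the one it is compared with. To stay in `ℝ≥0∞`, `-2ν z x f` is replaced by
`2ν⁻ z x f + 2ν⁺ z y f`; after integration the extra `2ν⁺` appears on both sides of the
comparison, since both normalisations equal `1`. -/
noncomputable def multiplierTerms (ϑ₁ ϑ₂ ν f F x y z : ℝ) : ℝ≥0∞ :=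
  ENNReal.ofReal (2 * ϑ₁) * ENNReal.ofReal (x * F) +
    ENNReal.ofReal (2 * ϑ₂) * ENNReal.ofReal (x * (1 - F)) +
    ENNReal.ofReal (2 * ν⁺) * ENNReal.ofReal (z * y * f) +
    ENNReal.ofReal (2 * ν⁻) * ENNReal.ofReal (z * x * f)

theorem ofReal_sq_mul_add_multiplierTerms_le {ϑ₁ ϑ₂ ν f F x z m : ℝ} (hϑ₁ : 0 ≤ ϑ₁)
    (hϑ₂ : 0 ≤ ϑ₂) (hf : 0 ≤ f) (hF : F ∈ Icc 0 1) (hz : 0 ≤ z) (hx : 0 ≤ x)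
    (hm : m = clippedMinimizer f (ϑ₂ + (ϑ₁ - ϑ₂) * F) (ν * z)) :
    ENNReal.ofReal (m ^ 2 * f) + multiplierTerms ϑ₁ ϑ₂ ν f F m x z ≤
      ENNReal.ofReal (x ^ 2 * f) + multiplierTerms ϑ₁ ϑ₂ ν f F x m z := by
  obtain ⟨hF0, hF1⟩ := hF
  have h1F : 0 ≤ 1 - F := sub_nonneg.2 hF1
  have hm0 : 0 ≤ m := hm ▸ clippedMinimizer_nonneg _ _ _
  have hmin := isMinOn_iff.1 (isMinOn_clippedMinimizer (a := ν * z) hf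
    (by nlinarith : 0 ≤ ϑ₂ + (ϑ₁ - ϑ₂) * F)) x hx
  rw [← hm, ← posPart_sub_negPart ν] at hmin
  have hν₁ := posPart_nonneg ν
  have hν₂ := negPart_nonneg ν
  simp (disch := positivity) only [multiplierTerms, ← ENNReal.ofReal_mul, ← ENNReal.ofReal_add]
  exact ENNReal.ofReal_le_ofReal (by linarith)

theorem lintegral_multiplierTerms {μ : Measure ℝ} (ϑ₁ ϑ₂ ν : ℝ) {f F h k : ℝ → ℝ}
    (hf : AEMeasurable f μ) (hF : AEMeasurable F μ) (hh : AEMeasurable h μ)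
    (hk : AEMeasurable k μ) :
    ∫⁻ z, multiplierTerms ϑ₁ ϑ₂ ν (f z) (F z) (h z) (k z) z ∂μ =
      ENNReal.ofReal (2 * ϑ₁) * ∫⁻ z, ENNReal.ofReal (h z * F z) ∂μ +
        ENNReal.ofReal (2 * ϑ₂) * ∫⁻ z, ENNReal.ofReal (h z * (1 - F z)) ∂μ +
        ENNReal.ofReal (2 * ν⁺) * ∫⁻ z, ENNReal.ofReal (z * k z * f z) ∂μ +
        ENNReal.ofReal (2 * ν⁻) * ∫⁻ z, ENNReal.ofReal (z * h z * f z) ∂μ := by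
  simp only [multiplierTerms]
  rw [lintegral_add_right' _ (by fun_prop), lintegral_add_right' _ (by fun_prop),
    lintegral_add_right' _ (by fun_prop)]
  simp only [lintegral_const_mul' _ _ ENNReal.ofReal_ne_top]

theorem lintegral_ofReal_eq_one_of_integral_eq_one {α : Type*} [MeasurableSpace α]
    {μ : Measure α} {u : α → ℝ} (hu : 0 ≤ᵐ[μ] u) (h : ∫ x, u x ∂μ = 1) :
    ∫⁻ x, ENNReal.ofReal (u x) ∂μ = 1 := by
  rw [← ofReal_integral_eq_lintegral_ofReal (.of_integral_ne_zero (h ▸ one_ne_zero)) hu, h,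
    ENNReal.ofReal_one]

theorem ofReal_mul_le_of_slackness {ϑ : ℝ} {u v B : ℝ≥0∞} (hs : ϑ = 0 ∨ v = B) (hu : u ≤ B) :
    ENNReal.ofReal (2 * ϑ) * u ≤ ENNReal.ofReal (2 * ϑ) * v := by
  rcases hs with rfl | rfl
  · simp
  · gcongr

theorem stmt13_general (f₀ : ℝ → ℝ) (hf₀m : Measurable f₀) (hf₀ : ∀ z ∈ Set.Ioi (0 : ℝ), 0 ≤ f₀ z)
    (F₀ : ℝ → ℝ) (hF₀mono : MonotoneOn F₀ (Set.Ioi 0))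
    (hF₀range : ∀ z ∈ Set.Ioi (0 : ℝ), F₀ z ∈ Set.Icc (0 : ℝ) 1)
    (ξ ξ₂ : ℝ)
    (ν ϑ₁ ϑ₂ : ℝ) (hϑ₁ : 0 ≤ ϑ₁) (hϑ₂ : 0 ≤ ϑ₂)
    (gstar : ℝ → ℝ)
    (gstar_def : ∀ z, gstar z =
      if 0 < f₀ z then max (ν * z - (ϑ₂ + (ϑ₁ - ϑ₂) * F₀ z) / f₀ z) 0 else 0)
    (hnorm : (∫ z in Set.Ioi (0 : ℝ), z * gstar z * f₀ z) = 1)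
    (hs1 : ϑ₁ = 0 ∨
      (∫⁻ z in Set.Ioi (0 : ℝ), ENNReal.ofReal (gstar z * F₀ z)) = ENNReal.ofReal (2 * ξ₂))
    (hs2 : ϑ₂ = 0 ∨
      (∫⁻ z in Set.Ioi (0 : ℝ), ENNReal.ofReal (gstar z * (1 - F₀ z))) = ENNReal.ofReal (2 * ξ)) :
    ∀ g : ℝ → ℝ, Measurable g → (∀ z ∈ Set.Ioi (0 : ℝ), 0 ≤ g z) →
      (∫ z in Set.Ioi (0 : ℝ), z * g z * f₀ z) = 1 →
      (∫⁻ z in Set.Ioi (0 : ℝ), ENNReal.ofReal (g z * F₀ z)) ≤ ENNReal.ofReal (2 * ξ₂) →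
      (∫⁻ z in Set.Ioi (0 : ℝ), ENNReal.ofReal (g z * (1 - F₀ z))) ≤ ENNReal.ofReal (2 * ξ) →
      (∫⁻ z in Set.Ioi (0 : ℝ), ENNReal.ofReal ((gstar z) ^ 2 * f₀ z)) ≤
        ∫⁻ z in Set.Ioi (0 : ℝ), ENNReal.ofReal ((g z) ^ 2 * f₀ z) := by
  intro g hgm hg0 hgnorm hgb1 hgb2
  have hpos : ∀ᵐ z ∂volume.restrict (Ioi (0 : ℝ)), 0 < z := ae_restrict_mem measurableSet_Ioi
  have hF₀m : AEMeasurable F₀ (volume.restrict (Ioi 0)) :=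
    aemeasurable_restrict_of_monotoneOn measurableSet_Ioi hF₀mono
  have hgstar_m : AEMeasurable gstar (volume.restrict (Ioi 0)) := by
    rw [show gstar = _ from funext gstar_def]
    exact aemeasurable_clippedMinimizer hf₀m (by fun_prop) (by fun_prop)
  have hlintegral_norm : ∀ h : ℝ → ℝ, (∀ z ∈ Ioi (0 : ℝ), 0 ≤ h z) →
      ∫ z in Ioi 0, z * h z * f₀ z = 1 → ∫⁻ z in Ioi 0, ENNReal.ofReal (z * h z * f₀ z) = 1 :=
    fun h h0 hint => lintegral_ofReal_eq_one_of_integral_eq_one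
      (hpos.mono fun z hz => mul_nonneg (mul_nonneg hz.le (h0 z hz)) (hf₀ z hz)) hint
  have hgstar_norm := hlintegral_norm gstar
    (fun z _ => gstar_def z ▸ clippedMinimizer_nonneg _ _ _) hnorm
  have hg_norm := hlintegral_norm g hg0 hgnorm
  have hb := lintegral_multiplierTerms ϑ₁ ϑ₂ ν hf₀m.aemeasurable hF₀m hgm.aemeasurable hgstar_m
  have hb' := lintegral_multiplierTerms ϑ₁ ϑ₂ ν hf₀m.aemeasurable hF₀m hgstar_m hgm.aemeasurable
  rw [hgstar_norm, hg_norm] at hb hb'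
  refine lintegral_le_of_ae_add_le_add
    (b := fun z => multiplierTerms ϑ₁ ϑ₂ ν (f₀ z) (F₀ z) (g z) (gstar z) z)
    (b' := fun z => multiplierTerms ϑ₁ ϑ₂ ν (f₀ z) (F₀ z) (gstar z) (g z) z) (by fun_prop)
    ?_ ?_ ?_
  · filter_upwards [hpos] with z hz
    exact ofReal_sq_mul_add_multiplierTerms_le hϑ₁ hϑ₂ (hf₀ z hz) (hF₀range z hz) hz.le
      (hg0 z hz) (gstar_def z)
  · rw [hb, hb']
    gcongr ?_ + ?_ + _ + _
    · exact ofReal_mul_le_of_slackness hs1 hgb1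
    · exact ofReal_mul_le_of_slackness hs2 hgb2
  · rw [hb]
    have := hgb1.trans_lt ENNReal.ofReal_lt_top
    have := hgb2.trans_lt ENNReal.ofReal_lt_top
    finiteness

/-- Theorem 2, scale part; KKT sufficiency for P2: let `f₀ ≥ 0` be measurable
on `(0,∞)`, `F₀ : (0,∞) → [0,1]` nondecreasing with `F₀(z) = F₀(0⁺) + ∫₀^z f₀`, and
`ξ ≥ ξ₂ > 0`.  With `ν* ∈ ℝ`, `ϑ₁* ≥ 0`, `ϑ₂* ≥ 0`, let
`g*(z) = max(ν*z − (ϑ₂* + (ϑ₁* − ϑ₂*)F₀(z))/f₀(z), 0)` where `f₀(z) > 0` (and `0` where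
`f₀(z) = 0`).  If `∫₀^∞ z g* f₀ = 1`, `∫₀^∞ g* F₀ ≤ 2ξ₂`, `∫₀^∞ g*(1−F₀) ≤ 2ξ`, the two
complementary slackness conditions hold, and `∫₀^∞ (g*)² f₀ < ∞`, then every measurable
nonnegative `g` with `∫₀^∞ z g f₀ = 1`, `∫₀^∞ g F₀ ≤ 2ξ₂`, `∫₀^∞ g(1−F₀) ≤ 2ξ` satisfies
`∫₀^∞ g² f₀ ≥ ∫₀^∞ (g*)² f₀`. -/
theorem stmt13 (f₀ : ℝ → ℝ) (hf₀m : Measurable f₀) (hf₀ : ∀ z ∈ Set.Ioi (0 : ℝ), 0 ≤ f₀ z)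
    (F₀ : ℝ → ℝ) (hF₀mono : MonotoneOn F₀ (Set.Ioi 0))
    (hF₀range : ∀ z ∈ Set.Ioi (0 : ℝ), F₀ z ∈ Set.Icc (0 : ℝ) 1)
    (hF₀der : ∃ c : ℝ, ∀ z ∈ Set.Ioi (0 : ℝ), F₀ z = c + ∫ t in Set.Ioc (0 : ℝ) z, f₀ t)
    (ξ ξ₂ : ℝ) (hξ₂ : 0 < ξ₂) (hξ : ξ₂ ≤ ξ)
    (ν ϑ₁ ϑ₂ : ℝ) (hϑ₁ : 0 ≤ ϑ₁) (hϑ₂ : 0 ≤ ϑ₂)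
    (gstar : ℝ → ℝ)
    (gstar_def : ∀ z, gstar z =
      if 0 < f₀ z then max (ν * z - (ϑ₂ + (ϑ₁ - ϑ₂) * F₀ z) / f₀ z) 0 else 0)
    (hnorm : (∫ z in Set.Ioi (0 : ℝ), z * gstar z * f₀ z) = 1)
    (hb1 : (∫⁻ z in Set.Ioi (0 : ℝ), ENNReal.ofReal (gstar z * F₀ z)) ≤
      ENNReal.ofReal (2 * ξ₂))
    (hb2 : (∫⁻ z in Set.Ioi (0 : ℝ), ENNReal.ofReal (gstar z * (1 - F₀ z))) ≤
      ENNReal.ofReal (2 * ξ))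
    (hs1 : ϑ₁ = 0 ∨
      (∫⁻ z in Set.Ioi (0 : ℝ), ENNReal.ofReal (gstar z * F₀ z)) = ENNReal.ofReal (2 * ξ₂))
    (hs2 : ϑ₂ = 0 ∨
      (∫⁻ z in Set.Ioi (0 : ℝ), ENNReal.ofReal (gstar z * (1 - F₀ z))) = ENNReal.ofReal (2 * ξ))
    (hfin : (∫⁻ z in Set.Ioi (0 : ℝ), ENNReal.ofReal ((gstar z) ^ 2 * f₀ z)) < ⊤) :
    ∀ g : ℝ → ℝ, Measurable g → (∀ z ∈ Set.Ioi (0 : ℝ), 0 ≤ g z) →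
      (∫ z in Set.Ioi (0 : ℝ), z * g z * f₀ z) = 1 →
      (∫⁻ z in Set.Ioi (0 : ℝ), ENNReal.ofReal (g z * F₀ z)) ≤ ENNReal.ofReal (2 * ξ₂) →
      (∫⁻ z in Set.Ioi (0 : ℝ), ENNReal.ofReal (g z * (1 - F₀ z))) ≤ ENNReal.ofReal (2 * ξ) →
      (∫⁻ z in Set.Ioi (0 : ℝ), ENNReal.ofReal ((gstar z) ^ 2 * f₀ z)) ≤
        ∫⁻ z in Set.Ioi (0 : ℝ), ENNReal.ofReal ((g z) ^ 2 * f₀ z) :=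
  stmt13_general f₀ hf₀m hf₀ F₀ hF₀mono hF₀range ξ ξ₂ ν ϑ₁ ϑ₂ hϑ₁ hϑ₂ gstar gstar_def hnorm hs1 hs2
end
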